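/- Local exponential decay via nonlinear Gronwall: suppose y : [0,∞) → [0,∞) is differentiable and satisfies y'(t) ≤ -2β²(1 - K y(t)^{1/2}) y(t) for constants β, K > 0, and y(0)^{1/2} < 1/K. Then y is nonincreasing and y(t) ≤ y(0)/(1 - K y(0)^{1/2})² · e^{-2β² t} for all t ≥ 0. -/
import Mathlib


set_option maxHeartbeats 1000000 in
theorem nonlinear_gronwall_exponential_decay (y y' : ℝ → ℝ) (β K : ℝ)
    (hβ : 0 < β) (hK : 0 < K)
    (h_nn : ∀ t, 0 ≤ t → 0 ≤ y t)
    (h_deriv : ∀ t, 0 ≤ t → HasDerivAt y (y' t) t)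
    (h_ineq : ∀ t, 0 ≤ t → y' t ≤ -2 * β ^ 2 * (1 - K * Real.sqrt (y t)) * y t)
    (h_init : Real.sqrt (y 0) < 1 / K) :
    AntitoneOn y (Set.Ici 0) ∧
    ∀ t, 0 ≤ t →
      y t ≤ y 0 / (1 - K * Real.sqrt (y 0)) ^ 2 * Real.exp (-2 * β ^ 2 * t) := by
  have hs0 : 0 ≤ Real.sqrt (y 0) := Real.sqrt_nonneg _
  have hKinv : 0 < 1 / K := by positivity
  set m : ℝ := (Real.sqrt (y 0) + 1 / K) / 2 with hmdef
  have hm0 : 0 < m := by rw [hmdef]; positivity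
  have h1 : Real.sqrt (y 0) < m := by rw [hmdef]; linarith
  have h2 : m < 1 / K := by rw [hmdef]; linarith
  have hy00 : 0 ≤ y 0 := h_nn 0 le_rfl
  have hy0m : y 0 < m ^ 2 := by
    have hsq := Real.sq_sqrt hy00
    nlinarith [h1, hs0, hm0]
  have hcont : ∀ t, 0 ≤ t → ContinuousAt y t := fun t ht => (h_deriv t ht).continuousAt
  have hfac : ∀ t, 0 ≤ t → y t < m ^ 2 → 0 < 1 - K * Real.sqrt (y t) := by
    intro t ht hy
    have hst : Real.sqrt (y t) < m := (Real.sqrt_lt' hm0).mpr hy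
    have hKm : K * m < 1 := by
      have := (lt_div_iff₀ hK).mp h2
      linarith
    nlinarith [Real.sqrt_nonneg (y t)]
  have key : ∀ t, 0 ≤ t → y t < m ^ 2 → y' t ≤ 0 := by
    intro t ht hy
    have h3 := hfac t ht hy
    have h4 := h_ineq t ht
    have h5 : 0 ≤ 2 * β ^ 2 * (1 - K * Real.sqrt (y t)) * y t :=
      mul_nonneg (mul_nonneg (by positivity) h3.le) (h_nn t ht)
    nlinarith
  have stepA : ∀ t, 0 ≤ t → y t < m ^ 2 := by
    intro t ht
    by_contra hcon
    push_neg at hcon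
    have hEne : (Set.Icc 0 t ∩ y ⁻¹' Set.Ici (m ^ 2)).Nonempty := ⟨t, ⟨ht, le_rfl⟩, hcon⟩
    have hyc : ContinuousOn y (Set.Icc 0 t) := fun u hu => (hcont u hu.1).continuousWithinAt
    have hEc : IsClosed (Set.Icc 0 t ∩ y ⁻¹' Set.Ici (m ^ 2)) :=
      hyc.preimage_isClosed_of_isClosed isClosed_Icc isClosed_Ici
    have hEcp : IsCompact (Set.Icc 0 t ∩ y ⁻¹' Set.Ici (m ^ 2)) :=
      isCompact_Icc.of_isClosed_subset hEc Set.inter_subset_left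
    obtain ⟨s, hsE, hslb⟩ := hEcp.exists_isLeast hEne
    have hs0t : 0 ≤ s := hsE.1.1
    have hst : s ≤ t := hsE.1.2
    have hsy : m ^ 2 ≤ y s := hsE.2
    have hIco : ∀ u ∈ Set.Ico (0 : ℝ) s, y u < m ^ 2 := by
      intro u hu
      by_contra h'
      push_neg at h'
      exact absurd (hslb ⟨⟨hu.1, hu.2.le.trans hst⟩, h'⟩) (not_le.mpr hu.2)
    have hanti : AntitoneOn y (Set.Icc 0 s) := by
      apply antitoneOn_of_deriv_nonpos (convex_Icc 0 s)
      · exact fun u hu => (hcont u hu.1).continuousWithinAt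
      · intro u hu
        rw [interior_Icc] at hu
        exact (h_deriv u hu.1.le).differentiableAt.differentiableWithinAt
      · intro u hu
        rw [interior_Icc] at hu
        rw [(h_deriv u hu.1.le).deriv]
        exact key u hu.1.le (hIco u ⟨hu.1.le, hu.2⟩)
    have : y s ≤ y 0 := hanti ⟨le_rfl, hs0t⟩ ⟨hs0t, le_rfl⟩ hs0t
    linarith
  have hfac' : ∀ t, 0 ≤ t → 0 < 1 - K * Real.sqrt (y t) :=
    fun t ht => hfac t ht (stepA t ht)
  have hAnti : AntitoneOn y (Set.Ici 0) := by
    apply antitoneOn_of_deriv_nonpos (convex_Ici 0)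
    · exact fun u hu => (hcont u hu).continuousWithinAt
    · intro u hu
      rw [interior_Ici] at hu
      exact (h_deriv u hu.le).differentiableAt.differentiableWithinAt
    · intro u hu
      rw [interior_Ici] at hu
      rw [(h_deriv u hu.le).deriv]
      exact key u hu.le (stepA u hu.le)
  refine ⟨hAnti, ?_⟩
  intro T hT
  have hRHSnn : 0 ≤ y 0 / (1 - K * Real.sqrt (y 0)) ^ 2 * Real.exp (-2 * β ^ 2 * T) := by
    positivity
  rcases eq_or_lt_of_le (h_nn T hT) with h0 | hyT
  · linarith
  -- main case : 0 < y T
  set F : ℝ → ℝ := fun u => Real.exp (β ^ 2 * u) *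
    (Real.sqrt (y u) / (1 - K * Real.sqrt (y u))) with hFdef
  have hypos : ∀ u ∈ Set.Icc (0 : ℝ) T, 0 < y u := fun u hu =>
    lt_of_lt_of_le hyT (hAnti hu.1 hT hu.2)
  have hFderiv : ∀ u, 0 ≤ u → 0 < y u → ∃ D, HasDerivAt F D u ∧ D ≤ 0 := by
    intro u hu hyu
    have hsu : 0 < Real.sqrt (y u) := Real.sqrt_pos.mpr hyu
    have hdu : 0 < 1 - K * Real.sqrt (y u) := hfac' u hu
    have hs' : HasDerivAt (fun v => Real.sqrt (y v)) (y' u / (2 * Real.sqrt (y u))) u :=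
      (h_deriv u hu).sqrt (ne_of_gt hyu)
    have hden : HasDerivAt (fun v => 1 - K * Real.sqrt (y v))
        (-(K * (y' u / (2 * Real.sqrt (y u))))) u := by
      simpa using (hs'.const_mul K).const_sub 1
    have hq : HasDerivAt (fun v => Real.sqrt (y v) / (1 - K * Real.sqrt (y v)))
        ((y' u / (2 * Real.sqrt (y u)) * (1 - K * Real.sqrt (y u)) -
          Real.sqrt (y u) * -(K * (y' u / (2 * Real.sqrt (y u))))) /
            (1 - K * Real.sqrt (y u)) ^ 2) u :=
      hs'.div hden (ne_of_gt hdu)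
    have hexp : HasDerivAt (fun v => Real.exp (β ^ 2 * v)) (Real.exp (β ^ 2 * u) * β ^ 2) u := by
      simpa using (HasDerivAt.exp ((hasDerivAt_id u).const_mul (β ^ 2)))
    refine ⟨_, hexp.mul hq, ?_⟩
    have hiq := h_ineq u hu
    have hyu2 : Real.sqrt (y u) ^ 2 = y u := Real.sq_sqrt hyu.le
    set s := Real.sqrt (y u) with hsdef
    have hyval : y u = s ^ 2 := hyu2.symm
    rw [hyval] at hiq
    have hEq : Real.exp (β ^ 2 * u) * β ^ 2 * (s / (1 - K * s)) +
        Real.exp (β ^ 2 * u) *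
          ((y' u / (2 * s) * (1 - K * s) - s * -(K * (y' u / (2 * s)))) / (1 - K * s) ^ 2) =
        Real.exp (β ^ 2 * u) / (2 * s * (1 - K * s) ^ 2) *
          (2 * β ^ 2 * s ^ 2 * (1 - K * s) + y' u) := by
      field_simp
      ring
    rw [hEq]
    have hden0 : (0:ℝ) ≤ 2 * s * (1 - K * s) ^ 2 :=
      mul_nonneg (by linarith) (sq_nonneg _)
    apply mul_nonpos_of_nonneg_of_nonpos (div_nonneg (Real.exp_pos _).le hden0)
    nlinarith [hiq]
  have hFanti : AntitoneOn F (Set.Icc 0 T) := by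
    apply antitoneOn_of_deriv_nonpos (convex_Icc 0 T)
    · intro u hu
      obtain ⟨D, hD, _⟩ := hFderiv u hu.1 (hypos u hu)
      exact hD.continuousAt.continuousWithinAt
    · intro u hu
      rw [interior_Icc] at hu
      obtain ⟨D, hD, _⟩ := hFderiv u hu.1.le (hypos u ⟨hu.1.le, hu.2.le⟩)
      exact hD.differentiableAt.differentiableWithinAt
    · intro u hu
      rw [interior_Icc] at hu
      obtain ⟨D, hD, hD0⟩ := hFderiv u hu.1.le (hypos u ⟨hu.1.le, hu.2.le⟩)
      rw [hD.deriv]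
      exact hD0
  have hFT : F T ≤ F 0 := hFanti ⟨le_rfl, hT⟩ ⟨hT, le_rfl⟩ hT
  have hF0 : F 0 = Real.sqrt (y 0) / (1 - K * Real.sqrt (y 0)) := by
    simp [hFdef]
  set a := Real.sqrt (y 0) with hadef
  set b := Real.sqrt (y T) with hbdef
  set E := Real.exp (β ^ 2 * T) with hEdef
  have hE : 0 < E := Real.exp_pos _
  have hb0 : 0 < b := Real.sqrt_pos.mpr hyT
  have hda : 0 < 1 - K * a := hfac' 0 le_rfl
  have hdb : 0 < 1 - K * b := hfac' T hT
  have hdb1 : 1 - K * b ≤ 1 := by nlinarith [hb0]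
  have hFTval : F T = E * (b / (1 - K * b)) := rfl
  rw [hFTval, hF0] at hFT
  have h5 : E * b ≤ a / (1 - K * a) := by
    have hbb : b ≤ b / (1 - K * b) := by
      rw [le_div_iff₀ hdb]
      nlinarith
    calc E * b ≤ E * (b / (1 - K * b)) := by
          exact mul_le_mul_of_nonneg_left hbb hE.le
      _ ≤ a / (1 - K * a) := hFT
  have hb2 : b ^ 2 = y T := Real.sq_sqrt (h_nn T hT)
  have ha2 : a ^ 2 = y 0 := Real.sq_sqrt hy00
  have h6 : (E * b) ^ 2 ≤ (a / (1 - K * a)) ^ 2 := by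
    have : 0 ≤ E * b := by positivity
    exact pow_le_pow_left₀ this h5 2
  have hexp2 : Real.exp (-2 * β ^ 2 * T) = E⁻¹ * E⁻¹ := by
    rw [show (-2 * β ^ 2 * T : ℝ) = -(β ^ 2 * T) + -(β ^ 2 * T) by ring,
      Real.exp_add, Real.exp_neg]
  rw [← hb2, ← ha2, hexp2]
  calc b ^ 2 = (E * b) ^ 2 * (E⁻¹ * E⁻¹) := by
        field_simp
    _ ≤ (a / (1 - K * a)) ^ 2 * (E⁻¹ * E⁻¹) := by
        exact mul_le_mul_of_nonneg_right h6 (by positivity)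
    _ = a ^ 2 / (1 - K * a) ^ 2 * (E⁻¹ * E⁻¹) := by rw [div_pow]
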